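/- arXiv:1409.3401 — 2 statements merged into one kernel-verified Lean document; each statement's English description precedes it below -/
import Mathlib

section
/- Let A be an integrally closed domain with fraction field K, and let B be an integral domain containing A that is finite as an A-module, with fraction field L (so L is a finite field extension of K). If the extension L/K is purely inseparable, then the induced map Spec B → Spec A is bijective; equivalently, for every prime ideal 𝔭 of A there is exactly one prime ideal of B lying over 𝔭. -/
/-!
STATEMENT 4: Let A be an integrally closed domain with fraction field K, and B ⊇ A an
integral domain, finite as an A-module, with fraction field L (a finite extension of K).
If L/K is purely inseparable, then Spec B → Spec A is bijective; equivalently, every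
prime ideal of A has exactly one prime ideal of B lying over it.
-/

theorem primeSpectrum_comap_bijective_of_purelyInseparable
    (A K B L : Type*) [CommRing A] [IsDomain A] [IsIntegrallyClosed A]
    [Field K] [Algebra A K] [IsFractionRing A K]
    [CommRing B] [IsDomain B] [Algebra A B] [Module.Finite A B]
    (hAB : Function.Injective (algebraMap A B))
    [Field L] [Algebra B L] [IsFractionRing B L]
    [Algebra K L] [Algebra A L] [IsScalarTower A K L] [IsScalarTower A B L]
    [FiniteDimensional K L] [IsPurelyInseparable K L] :
    Function.Bijective (PrimeSpectrum.comap (algebraMap A B)) ∧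
    ∀ p : Ideal A, p.IsPrime →
      ∃! q : Ideal B, q.IsPrime ∧ q.comap (algebraMap A B) = p := by
  have hint : Algebra.IsIntegral A B := Algebra.IsIntegral.of_finite A B
  obtain ⟨q, hq⟩ := ExpChar.exists K
  -- key: every b : B has some power (with exponent q ^ n) in the image of A
  have key : ∀ b : B, ∃ n : ℕ, ∃ a : A, algebraMap A B a = b ^ q ^ n := by
    intro b
    obtain ⟨n, k, hk⟩ := IsPurelyInseparable.pow_mem K q (algebraMap B L b)
    have hbL : IsIntegral A (algebraMap B L b) :=
      ((hint.isIntegral b).map (IsScalarTower.toAlgHom A B L))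
    have hk_int : IsIntegral A k := by
      apply IsIntegral.tower_bot (B := L) (algebraMap K L).injective
      rw [hk]
      exact hbL.pow (q ^ n)
    obtain ⟨a, ha⟩ := IsIntegrallyClosed.isIntegral_iff.mp hk_int
    refine ⟨n, a, ?_⟩
    apply IsFractionRing.injective B L
    rw [← IsScalarTower.algebraMap_apply A B L, IsScalarTower.algebraMap_apply A K L,
      ha, hk, map_pow]
  -- uniqueness of primes over a given prime
  have huniq : ∀ q₁ q₂ : Ideal B, q₁.IsPrime → q₂.IsPrime →
      q₁.comap (algebraMap A B) = q₂.comap (algebraMap A B) → q₁ = q₂ := by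
    have aux : ∀ q₁ q₂ : Ideal B, q₁.IsPrime → q₂.IsPrime →
        q₁.comap (algebraMap A B) = q₂.comap (algebraMap A B) → q₁ ≤ q₂ := by
      intro q₁ q₂ h₁ h₂ h b hb
      obtain ⟨n, a, ha⟩ := key b
      have : a ∈ q₁.comap (algebraMap A B) := by
        simpa [Ideal.mem_comap, ha] using q₁.pow_mem_of_mem hb _ ((expChar_pow_pos K q n))
      rw [h] at this
      rw [Ideal.mem_comap, ha] at this
      exact h₂.mem_of_pow_mem _ this
    intro q₁ q₂ h₁ h₂ h
    exact le_antisymm (aux q₁ q₂ h₁ h₂ h) (aux q₂ q₁ h₂ h₁ h.symm)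
  constructor
  · constructor
    · intro Q₁ Q₂ h
      ext1
      exact huniq _ _ Q₁.2 Q₂.2 (congrArg PrimeSpectrum.asIdeal h)
    · intro P
      obtain ⟨Q, hQ, hQ'⟩ := Ideal.exists_ideal_over_prime_of_isIntegral_of_isDomain
        (S := B) P.asIdeal (by rw [(RingHom.injective_iff_ker_eq_bot _).mp hAB]; exact bot_le)
      exact ⟨⟨Q, hQ⟩, PrimeSpectrum.ext hQ'⟩
  · intro p hp
    obtain ⟨Q, hQ, hQ'⟩ := Ideal.exists_ideal_over_prime_of_isIntegral_of_isDomain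
      (S := B) p (by rw [(RingHom.injective_iff_ker_eq_bot _).mp hAB]; exact bot_le)
    exact ⟨Q, ⟨hQ, hQ'⟩, fun q' ⟨hq', hq''⟩ => huniq _ _ hq' hQ (hq''.trans hQ'.symm)⟩
end

section
/- Let C be a category with pullbacks, let P be a class of morphisms of C stable under composition and under base change, and let F : Cᵒᵖ → Type be a presheaf such that for every morphism f : V ⟶ W belonging to P, the restriction map F(W) → F(V) is injective. Let π : U ⟶ X, π' : Y ⟶ U, π_i : Y ⟶ W and π_s : W ⟶ X be morphisms belonging to P with π ∘ π' = π_s ∘ π_i. If F satisfies the sheaf condition for the singleton covers {π_s} and {π_i} (i.e. F(X) → F(W) ⇉ F(W ×_X W) and F(W) → F(Y) ⇉ F(Y ×_W Y) are equalizer diagrams), then F satisfies the sheaf condition for the singleton cover {π}: the diagram F(X) → F(U) ⇉ F(U ×_X U) is an equalizer. -/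
/-!
Restrict a compatible section `x` of `F(U)` along `π'` to `Y`; it is compatible for `π_i`,
so it descends to some `z` on `W`. The section `z` is compatible for `π_s` because its two
restrictions to `W ×_X W` become equal on `Y ×_X Y`, and the induced map
`Y ×_X Y ⟶ W ×_X W` lies in `P` (it is a composite of two base changes of `π_i`), so `F`
of it is injective. Hence `z` descends to `y` on `X`, and `F(π) y = x` is checked after
the injective restriction along `π'`.
-/

open CategoryTheory CategoryTheory.Limits Opposite

universe w v u

/-- The sheaf condition for the singleton cover `{g}`: the diagram
`F(W) → F(V) ⇉ F(V ×_W V)` is an equalizer of types. -/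
def SingletonSheafCondition {C : Type u} [Category.{v} C] [HasPullbacks C]
    (F : Cᵒᵖ ⥤ Type w) {V W : C} (g : V ⟶ W) : Prop :=
  ∀ x : F.obj (op V),
    F.map (pullback.fst g g).op x = F.map (pullback.snd g g).op x →
      ∃! y : F.obj (op W), F.map g.op y = x

namespace SingletonSheafCondition

variable {C : Type u} [Category.{v} C] [HasPullbacks C] (F : Cᵒᵖ ⥤ Type w)

def IsCompatible {V W : C} (g : V ⟶ W) (x : F.obj (op V)) : Prop :=
  F.map (pullback.fst g g).op x = F.map (pullback.snd g g).op x

variable {F}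

lemma IsCompatible.map_eq_map {U X Z : C} {π : U ⟶ X} {x : F.obj (op U)}
    (hx : IsCompatible F π x) {a b : Z ⟶ U} (h : a ≫ π = b ≫ π) :
    F.map a.op x = F.map b.op x := by
  simpa only [← Functor.map_comp_apply, ← op_comp, pullback.lift_fst, pullback.lift_snd] using
    congrArg (F.map (pullback.lift a b h).op) hx

lemma IsCompatible.map {U X Y W : C} {π : U ⟶ X} {x : F.obj (op U)}
    (hx : IsCompatible F π x) {h : Y ⟶ U} {g : Y ⟶ W} {s : W ⟶ X} (hfac : h ≫ π = g ≫ s) :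
    IsCompatible F g (F.map h.op x) := by
  simp only [IsCompatible, ← Functor.map_comp_apply, ← op_comp]
  exact hx.map_eq_map (by simp only [Category.assoc, hfac, pullback.condition_assoc])

lemma IsCompatible.of_map {Y W X : C} {g : Y ⟶ W} {s : W ⟶ X} {z : F.obj (op W)}
    (hinj : Function.Injective (F.map (pullback.map (g ≫ s) (g ≫ s) s s g g (𝟙 X)
      (Category.comp_id _) (Category.comp_id _)).op))
    (hz : IsCompatible F (g ≫ s) (F.map g.op z)) :
    IsCompatible F s z := by
  apply hinj
  simpa only [IsCompatible, ← Functor.map_comp_apply, ← op_comp, pullback.lift_fst,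
    pullback.lift_snd] using hz

end SingletonSheafCondition

open SingletonSheafCondition

theorem singletonSheafCondition_of_factorization_general
    {C : Type u} [Category.{v} C] [HasPullbacks C]
    (P : MorphismProperty C) [P.IsStableUnderComposition] [P.IsStableUnderBaseChange]
    (F : Cᵒᵖ ⥤ Type w)
    (hinj : ∀ {V W : C} (f : V ⟶ W), P f → Function.Injective (F.map f.op))
    {U X Y W : C} (π : U ⟶ X) (π' : Y ⟶ U) (πi : Y ⟶ W) (πs : W ⟶ X)
    (hπ : P π) (hπ' : P π') (hπi : P πi)
    (hfac : π' ≫ π = πi ≫ πs)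
    (hs : SingletonSheafCondition F πs) (hi : SingletonSheafCondition F πi) :
    SingletonSheafCondition F π := by
  intro x (hx : IsCompatible F π x)
  obtain ⟨z, hz, -⟩ := hi _ (hx.map hfac)
  have hzs : IsCompatible F πs z := by
    refine IsCompatible.of_map (hinj _ (P.pullbackMap hπi hπi rfl rfl)) ?_
    rw [hz]
    exact hx.map (s := 𝟙 X) (by rw [hfac, Category.comp_id])
  obtain ⟨y, hy, -⟩ := hs z hzs
  have hyx : F.map π.op y = x := hinj π' hπ' <| by
    rw [← Functor.map_comp_apply, ← op_comp, hfac, op_comp,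
      Functor.map_comp_apply, hy, hz]
  exact ⟨y, hyx, fun y' hy' => hinj π hπ (hy'.trans hyx.symm)⟩

theorem singletonSheafCondition_of_factorization
    {C : Type u} [Category.{v} C] [HasPullbacks C]
    (P : MorphismProperty C) [P.IsStableUnderComposition] [P.IsStableUnderBaseChange]
    (F : Cᵒᵖ ⥤ Type w)
    (hinj : ∀ {V W : C} (f : V ⟶ W), P f → Function.Injective (F.map f.op))
    {U X Y W : C} (π : U ⟶ X) (π' : Y ⟶ U) (πi : Y ⟶ W) (πs : W ⟶ X)
    (hπ : P π) (hπ' : P π') (hπi : P πi) (hπs : P πs)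
    (hfac : π' ≫ π = πi ≫ πs)
    (hs : SingletonSheafCondition F πs) (hi : SingletonSheafCondition F πi) :
    SingletonSheafCondition F π :=
  singletonSheafCondition_of_factorization_general P F hinj π π' πi πs hπ hπ' hπi hfac hs hi
end
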